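/- arXiv:1608.01256 — 3 statements merged into one kernel-verified Lean document; each statement's English description precedes it below -/
import Mathlib

section
/- Let G be a group, H ≤ G a subgroup, and g ∈ G such that the double coset HgH is a union of finitely many right cosets of H. Then for every h ∈ H there exists a positive integer κ such that (g h g⁻¹)^κ ∈ H. -/
/-!
Every coset `H * (g * h ^ n)` lies in `H * g * H`, hence is one of the finitely many cosets
`H * t`, `t ∈ T`. By pigeonhole two of them coincide, say for `n < m`; then
`g * h ^ m * (g * h ^ n)⁻¹ = (g * h * g⁻¹) ^ (m - n)` lies in `H`.
-/

namespace Subgroup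

variable {G : Type*} [Group G]

theorem exists_lt_mul_inv_mem_of_forall_mem_rightCosets (H : Subgroup G) (T : Finset G)
    (f : ℕ → G) (hf : ∀ n, ∃ t ∈ T, ∃ a ∈ H, f n = a * t) :
    ∃ n m, n < m ∧ f m * (f n)⁻¹ ∈ H := by
  choose t htT a haH hfa using hf
  obtain ⟨n, m, hnm, htnm⟩ := Set.Finite.exists_lt_map_eq_of_forall_mem htT T.finite_toSet
  refine ⟨n, m, hnm, ?_⟩
  have hquot : f m * (f n)⁻¹ = a m * (a n)⁻¹ := by
    rw [hfa m, hfa n, htnm]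
    group
  rw [hquot]
  exact H.mul_mem (haH m) (H.inv_mem (haH n))

end Subgroup

theorem conj_pow_mem_of_doubleCoset_finite {G : Type*} [Group G] (H : Subgroup G) (g : G)
    (T : Finset G)
    (hT : ∀ h₁ ∈ H, ∀ h₂ ∈ H, ∃ t ∈ T, ∃ h ∈ H, h₁ * g * h₂ = h * t)
    (h : G) (hh : h ∈ H) :
    ∃ κ : ℕ, 0 < κ ∧ (g * h * g⁻¹) ^ κ ∈ H := by
  have hcoset : ∀ n : ℕ, ∃ t ∈ T, ∃ a ∈ H, g * h ^ n = a * t := fun n => by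
    simpa using hT 1 H.one_mem (h ^ n) (H.pow_mem hh n)
  obtain ⟨n, m, hnm, hmem⟩ := H.exists_lt_mul_inv_mem_of_forall_mem_rightCosets T _ hcoset
  refine ⟨m - n, Nat.sub_pos_of_lt hnm, ?_⟩
  have hconj : (g * h * g⁻¹) ^ (m - n) = g * h ^ m * (g * h ^ n)⁻¹ := by
    rw [conj_pow, ← pow_sub_mul_pow h hnm.le]
    group
  rwa [hconj]
end

section
/- In the discrete Heisenberg-type group H(s₁,…,sₙ) with underlying set ℤⁿ × ℤⁿ × ℤ and multiplication (u,v,z)(u',v',z') = (u+u', v+v', z+z'+Σ sᵢ uᵢ v'ᵢ) where each sᵢ is a nonzero integer, the commutator subgroup equals {(0,0,s₁ z) : z ∈ ℤ}, provided s₁ divides every sᵢ. -/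
/-- The discrete Heisenberg-type group `H(s₁, …, sₙ)` on `ℤⁿ × ℤⁿ × ℤ`. -/
@[ext] structure Heis (n : ℕ) (s : Fin n → ℤ) where
  u : Fin n → ℤ
  v : Fin n → ℤ
  z : ℤ

namespace Heis

variable {n : ℕ} {s : Fin n → ℤ}

instance : Mul (Heis n s) :=
  ⟨fun a b => ⟨a.u + b.u, a.v + b.v, a.z + b.z + ∑ i, s i * a.u i * b.v i⟩⟩

instance : One (Heis n s) := ⟨⟨0, 0, 0⟩⟩

instance : Inv (Heis n s) :=
  ⟨fun a => ⟨-a.u, -a.v, -a.z + ∑ i, s i * a.u i * a.v i⟩⟩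

@[simp] lemma mul_u (a b : Heis n s) : (a * b).u = a.u + b.u := rfl
@[simp] lemma mul_v (a b : Heis n s) : (a * b).v = a.v + b.v := rfl
@[simp] lemma mul_z (a b : Heis n s) :
    (a * b).z = a.z + b.z + ∑ i, s i * a.u i * b.v i := rfl
@[simp] lemma one_u : (1 : Heis n s).u = 0 := rfl
@[simp] lemma one_v : (1 : Heis n s).v = 0 := rfl
@[simp] lemma one_z : (1 : Heis n s).z = 0 := rfl
@[simp] lemma inv_u (a : Heis n s) : a⁻¹.u = -a.u := rfl
@[simp] lemma inv_v (a : Heis n s) : a⁻¹.v = -a.v := rfl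
@[simp] lemma inv_z (a : Heis n s) :
    a⁻¹.z = -a.z + ∑ i, s i * a.u i * a.v i := rfl

instance : Group (Heis n s) where
  mul_assoc a b c := by
    ext <;>
      simp [Pi.add_apply, mul_add, add_mul, Finset.sum_add_distrib] <;> ring
  one_mul a := by ext <;> simp
  mul_one a := by ext <;> simp
  inv_mul_cancel a := by
    ext <;> simp [Pi.add_apply, mul_neg, neg_mul, Finset.sum_neg_distrib]

end Heis

/-! The commutator of `(u, v, z)` and `(u', v', z')` is `(0, 0, ∑ sᵢ (uᵢ v'ᵢ - u'ᵢ vᵢ))`, whose last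
coordinate is divisible by `s₁`; conversely `(0, 0, s₁ m)` is the commutator of `(e₁, 0, 0)` and
`(0, m e₁, 0)`. -/

open scoped commutatorElement

namespace Heis

variable {n : ℕ} {s : Fin n → ℤ}

lemma commutatorElement_eq (a b : Heis n s) :
    ⁅a, b⁆ = ⟨0, 0, ∑ i, s i * (a.u i * b.v i - b.u i * a.v i)⟩ := by
  change a * b * a⁻¹ * b⁻¹ = _
  ext
  · simp
  · simp
  · simp only [mul_z, inv_z, mul_u, inv_u, inv_v, Pi.add_apply, Pi.neg_apply]
    simp only [mul_add, add_mul, mul_neg, neg_mul, mul_sub, Finset.sum_add_distrib,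
      Finset.sum_neg_distrib, Finset.sum_sub_distrib]
    ring

lemma commutatorElement_single (i : Fin n) (m : ℤ) :
    ⁅(⟨Pi.single i 1, 0, 0⟩ : Heis n s), (⟨0, Pi.single i m, 0⟩ : Heis n s)⁆ =
      ⟨0, 0, s i * m⟩ := by
  rw [commutatorElement_eq]
  ext <;> simp [Pi.single_apply]

def centralMultiples (d : ℤ) : Subgroup (Heis n s) where
  carrier := {g | g.u = 0 ∧ g.v = 0 ∧ d ∣ g.z}
  one_mem' := ⟨rfl, rfl, dvd_zero d⟩
  mul_mem' := by
    rintro a b ⟨hau, hav, haz⟩ ⟨hbu, hbv, hbz⟩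
    exact ⟨by simp [hau, hbu], by simp [hav, hbv], by simpa [hau] using dvd_add haz hbz⟩
  inv_mem' := by
    rintro a ⟨hau, hav, haz⟩
    exact ⟨by simp [hau], by simp [hav], by simpa [hau] using haz⟩

lemma mem_centralMultiples {d : ℤ} {g : Heis n s} :
    g ∈ centralMultiples d ↔ ∃ m : ℤ, g = ⟨0, 0, d * m⟩ := by
  constructor
  · rintro ⟨hu, hv, m, hm⟩
    exact ⟨m, Heis.ext hu hv hm⟩
  · rintro ⟨m, rfl⟩
    exact ⟨rfl, rfl, dvd_mul_right d m⟩

lemma commutator_le_centralMultiples {d : ℤ} (hd : ∀ i, d ∣ s i) :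
    commutator (Heis n s) ≤ centralMultiples d := by
  rw [commutator_def, Subgroup.commutator_le]
  intro a _ b _
  rw [commutatorElement_eq]
  exact ⟨rfl, rfl, show d ∣ ∑ _, _ from Finset.dvd_sum fun i _ => dvd_mul_of_dvd_left (hd i) _⟩

lemma centralMultiples_le_commutator (i : Fin n) :
    centralMultiples (s i) ≤ commutator (Heis n s) := by
  intro g hg
  obtain ⟨m, rfl⟩ := mem_centralMultiples.mp hg
  rw [← commutatorElement_single]
  exact Subgroup.commutator_mem_commutator (Subgroup.mem_top _) (Subgroup.mem_top _)

lemma commutator_eq_centralMultiples {i : Fin n} (hdvd : ∀ j, s i ∣ s j) :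
    commutator (Heis n s) = centralMultiples (s i) :=
  le_antisymm (commutator_le_centralMultiples hdvd) (centralMultiples_le_commutator i)

end Heis

theorem heis_commutator_eq_general {n : ℕ} (s : Fin (n + 1) → ℤ)
    (hdvd : ∀ i, s 0 ∣ s i) :
    (commutator (Heis (n + 1) s) : Set (Heis (n + 1) s)) =
      {g : Heis (n + 1) s | ∃ m : ℤ, g = ⟨0, 0, s 0 * m⟩} := by
  rw [Heis.commutator_eq_centralMultiples hdvd]
  ext g
  exact Heis.mem_centralMultiples

theorem heis_commutator_eq {n : ℕ} (s : Fin (n + 1) → ℤ)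
    (hpos : ∀ i, 0 < s i) (hdvd : ∀ i, s 0 ∣ s i) :
    (commutator (Heis (n + 1) s) : Set (Heis (n + 1) s)) =
      {g : Heis (n + 1) s | ∃ m : ℤ, g = ⟨0, 0, s 0 * m⟩} :=
  heis_commutator_eq_general s hdvd
end

section
/- Let G be a finitely generated nilpotent group and H ≤ K ≤ G subgroups such that some positive power of each element of a generating set of K lies in H. Then H has finite index in K and √H = √K. -/
/-- The radical (isolated closure) of a subgroup: the smallest subgroup containing `H`
that is radical, i.e. closed under taking roots. -/
def Subgroup.radical {G : Type*} [Group G] (H : Subgroup G) : Subgroup G :=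
  sInf {K : Subgroup G | H ≤ K ∧ ∀ (x : G) (m : ℕ), 0 < m → x ^ m ∈ K → x ∈ K}

/-!
Induct on the nilpotency class of `K = ⟨S⟩`. Let `A` be the last nontrivial term of the lower
central series of `K`; it is central, and by induction applied to `K ⧸ A` the subgroup `H ⊔ A`
has finite index in `K`. The abelian group `A` is generated by the finitely many left-normed
commutators `⁅⋯⁅s₁, s₂⁆, ⋯, sₖ⁆` of generators. Commutators landing in the centre are
bilinear, so if `x ^ N ∈ H ⊔ A` and `s ^ M ∈ H` then `⁅x, s⁆ ^ (M * N) = ⁅x ^ N, s ^ M⁆ ∈ H`: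
every generator of `A` has a positive power in `H`. A finitely generated abelian torsion group
is finite, hence `[H ⊔ A : H] = [A : A ⊓ H]` is finite, and so is `[K : H]`.
The radicals agree because `H ≤ K ≤ √H`.
-/

open Subgroup commutatorElement

section

variable {G : Type*} [Group G]

theorem commutatorElement_pow_right_of_commute {x y : G} (h : Commute ⁅x, y⁆ y) (n : ℕ) :
    ⁅x, y ^ n⁆ = ⁅x, y⁆ ^ n := by
  induction n with
  | zero => simp
  | succ n ih =>
    rw [pow_succ', commutatorElement_mul_right_eq_mul_conj, ih, mul_assoc _ y,
      ← (h.pow_left n).eq, ← mul_assoc, mul_inv_cancel_right, pow_succ']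

theorem commutatorElement_pow_left_of_commute {x y : G} (h : Commute ⁅x, y⁆ x) (n : ℕ) :
    ⁅x ^ n, y⁆ = ⁅x, y⁆ ^ n := by
  induction n with
  | zero => simp
  | succ n ih =>
    rw [pow_succ', commutatorElement_mul_left_eq_conj_mul, ih, ← (h.pow_left n).eq,
      mul_inv_cancel_right, pow_succ]

theorem commutatorElement_mul_left_of_commute {x a y : G} (h : Commute a y) :
    ⁅x * a, y⁆ = ⁅x, y⁆ := by
  rw [commutatorElement_def, commutatorElement_def, mul_assoc x, h.eq]
  group

theorem commutatorElement_pow_mem_of_central {H : Subgroup G} {x y : G} {M N : ℕ}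
    (hx : ∀ g, ⁅x, g⁆ ∈ center G) (hxN : x ^ N ∈ H ⊔ center G) (hyM : y ^ M ∈ H) :
    ⁅x, y⁆ ^ (M * N) ∈ H := by
  have central (g w : G) : Commute ⁅x, g⁆ w := (mem_center_iff.mp (hx g) w).symm
  obtain ⟨h, hh, z, hz, hxN⟩ := mem_sup_of_normal_right.mp hxN
  have hzy : Commute z (y ^ M) := (mem_center_iff.mp hz _).symm
  rw [pow_mul, ← commutatorElement_pow_right_of_commute (central y y),
    ← commutatorElement_pow_left_of_commute (central _ x), ← hxN,
    commutatorElement_mul_left_of_commute hzy]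
  exact commutator_le_self H (commutator_mem_commutator hh hyM)

theorem commutator_closure_le {N : Subgroup G} [N.Normal] {T S : Set G}
    (h : ∀ t ∈ T, ∀ s ∈ S, ⁅t, s⁆ ∈ N) : ⁅closure T, closure S⁆ ≤ N := by
  rw [← QuotientGroup.ker_mk' N, ← Subgroup.map_eq_bot_iff, map_commutator,
    MonoidHom.map_closure, MonoidHom.map_closure, commutator_eq_bot_iff_le_centralizer,
    closure_le, centralizer_closure]
  rintro _ ⟨t, ht, rfl⟩ _ ⟨s, hs, rfl⟩
  rw [eq_comm, ← commutatorElement_eq_one_iff_mul_comm, ← map_commutatorElement,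
    QuotientGroup.mk'_apply, QuotientGroup.eq_one_iff]
  exact h t ht s hs

theorem normal_sup_of_commutator_le {K N : Subgroup G} [N.Normal] (h : ⁅K, ⊤⁆ ≤ N) :
    (K ⊔ N).Normal := by
  have hcentral : ⁅K.map (QuotientGroup.mk' N), (⊤ : Subgroup (G ⧸ N))⁆ = ⊥ := by
    rw [← map_top_of_surjective _ (QuotientGroup.mk'_surjective N), ← map_commutator,
      Subgroup.map_eq_bot_iff, QuotientGroup.ker_mk']
    exact h
  have : (K.map (QuotientGroup.mk' N)).Normal :=
    commutator_top_right_le_iff.mp (hcentral ▸ bot_le)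
  simpa [comap_map_eq] using this.comap (QuotientGroup.mk' N)

theorem relIndex_sup_left_of_le_normalizer {H N : Subgroup G} (hN : N ≤ normalizer H) :
    H.relIndex (H ⊔ N) = H.relIndex N := by
  rw [sup_comm]
  have := normal_subgroupOf_sup_of_le_normalizer hN
  have hsup := relIndex_sup_right (N.subgroupOf (N ⊔ H)) (H.subgroupOf (N ⊔ H))
  rwa [(codisjoint_subgroupOf_sup N H).eq_top, relIndex_top_right,
    relIndex_subgroupOf le_sup_left] at hsup

def iteratedCommutators (S : Set G) : ℕ → Set G
  | 0 => S
  | k + 1 => Set.image2 (⁅·, ·⁆) (iteratedCommutators S k) S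

theorem iteratedCommutators_finite {S : Set G} (hS : S.Finite) :
    ∀ k, (iteratedCommutators S k).Finite
  | 0 => hS
  | k + 1 => (iteratedCommutators_finite hS k).image2 _ hS

theorem iteratedCommutators_subset_lowerCentralSeries (S : Set G) :
    ∀ k, iteratedCommutators S k ⊆ (⊤ : Subgroup G).lowerCentralSeries k
  | 0 => fun x _ => mem_top x
  | k + 1 => by
    rintro _ ⟨x, hx, s, -, rfl⟩
    exact commutator_mem_commutator (iteratedCommutators_subset_lowerCentralSeries S k hx)
      (mem_top s)

theorem lowerCentralSeries_le_closure_iteratedCommutators_sup {S : Set G}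
    (hgen : closure S = ⊤) :
    ∀ k, (⊤ : Subgroup G).lowerCentralSeries k ≤
      closure (iteratedCommutators S k) ⊔ (⊤ : Subgroup G).lowerCentralSeries (k + 1)
  | 0 => hgen ▸ le_sup_left
  | k + 1 => by
    have : (closure (iteratedCommutators S (k + 1)) ⊔
        (⊤ : Subgroup G).lowerCentralSeries (k + 2)).Normal :=
      normal_sup_of_commutator_le <| commutator_mono
        ((closure_le _).mpr (iteratedCommutators_subset_lowerCentralSeries S (k + 1))) le_rfl
    calc (⊤ : Subgroup G).lowerCentralSeries (k + 1)
        ≤ ⁅closure (iteratedCommutators S k ∪ (⊤ : Subgroup G).lowerCentralSeries (k + 1)),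
            closure S⁆ := by
          rw [Subgroup.closure_union, Subgroup.closure_eq, hgen]
          exact commutator_mono
            (lowerCentralSeries_le_closure_iteratedCommutators_sup hgen k) le_rfl
      _ ≤ _ := by
          refine commutator_closure_le fun t ht s hs => ?_
          rcases ht with ht | ht
          · exact mem_sup_left (subset_closure ⟨t, ht, s, hs, rfl⟩)
          · exact mem_sup_right (commutator_mem_commutator ht (mem_top s))

theorem index_ne_zero_of_commGroup {G : Type*} [CommGroup G] {H : Subgroup G} {S : Set G}
    (hS : S.Finite) (hgen : closure S = ⊤) (hpow : ∀ s ∈ S, ∃ n, 0 < n ∧ s ^ n ∈ H) :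
    H.index ≠ 0 := by
  have : Group.FG G := Group.fg_iff.mpr ⟨S, hgen, hS⟩
  have : Group.FG (G ⧸ H) := Group.fg_of_surjective (QuotientGroup.mk'_surjective H)
  have htorsion : (CommGroup.torsion (G ⧸ H)).comap (QuotientGroup.mk' H) = ⊤ := by
    refine eq_top_iff.mpr (hgen ▸ (closure_le _).mpr fun s hs => ?_)
    obtain ⟨n, hn, hsn⟩ := hpow s hs
    refine (CommGroup.mem_torsion _).mpr (isOfFinOrder_iff_pow_eq_one.mpr ⟨n, hn, ?_⟩)
    rwa [← map_pow, QuotientGroup.mk'_apply, QuotientGroup.eq_one_iff]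
  have : Finite (G ⧸ H) := CommGroup.finite_of_fg_isMulTorsion _ fun q => by
    obtain ⟨g, rfl⟩ := QuotientGroup.mk'_surjective H q
    exact (CommGroup.mem_torsion _).mp (htorsion ▸ mem_top g : g ∈ _)
  exact index_ne_zero_of_finite

variable {H : Subgroup G} {S : Set G}

theorem forall_exists_pow_mem_subgroupOf {K : Subgroup G}
    (hpow : ∀ s ∈ S, ∃ n, 0 < n ∧ s ^ n ∈ H) :
    ∀ s ∈ ((↑) : K → G) ⁻¹' S, ∃ n, 0 < n ∧ s ^ n ∈ H.subgroupOf K := fun s hs =>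
  (hpow s hs).imp fun _ hn => ⟨hn.1, by simpa [mem_subgroupOf] using hn.2⟩

open IsMulCommutative in
theorem relIndex_closure_ne_zero_of_isMulCommutative (hS : S.Finite)
    [IsMulCommutative (closure S)] (hpow : ∀ s ∈ S, ∃ n, 0 < n ∧ s ^ n ∈ H) :
    H.relIndex (closure S) ≠ 0 :=
  index_ne_zero_of_commGroup (hS.preimage Subtype.val_injective.injOn)
    closure_closure_coe_preimage (forall_exists_pow_mem_subgroupOf hpow)

theorem index_ne_zero_of_lowerCentralSeries_eq_bot {m : ℕ} (hS : S.Finite)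
    (hgen : closure S = ⊤) (hm : (⊤ : Subgroup G).lowerCentralSeries m = ⊥)
    (hpow : ∀ s ∈ S, ∃ n, 0 < n ∧ s ^ n ∈ H) : H.index ≠ 0 := by
  induction m generalizing G with
  | zero =>
    rw [index_eq_one.mpr (eq_top_iff.mpr (hm.le.trans bot_le))]
    exact one_ne_zero
  | succ m ih =>
    set A := (⊤ : Subgroup G).lowerCentralSeries m
    have hA : A ≤ center G := commutator_top_right_eq_bot_iff_le_center.mp hm
    have hHA : (H ⊔ A).index ≠ 0 := by
      let π := QuotientGroup.mk' A
      have hπ : Function.Surjective π := QuotientGroup.mk'_surjective A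
      have := ih (H := H.map π) (S := π '' S) (hS.image π)
        (by rw [← MonoidHom.map_closure, hgen, map_top_of_surjective π hπ])
        (by rw [← map_top_of_surjective π hπ, ← map_lowerCentralSeries,
          Subgroup.map_eq_bot_iff, QuotientGroup.ker_mk'])
        (by
          rintro _ ⟨s, hs, rfl⟩
          exact (hpow s hs).imp fun n hn => ⟨hn.1, map_pow π s n ▸ mem_map_of_mem π hn.2⟩)
      rwa [← index_comap_of_surjective _ hπ, comap_map_eq, QuotientGroup.ker_mk'] at this
    have hgenA : closure (iteratedCommutators S m) = A := by
      refine le_antisymm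
        ((closure_le _).mpr (iteratedCommutators_subset_lowerCentralSeries S m)) ?_
      have := lowerCentralSeries_le_closure_iteratedCommutators_sup hgen m
      rwa [hm, sup_bot_eq] at this
    have hpowA : ∀ t ∈ iteratedCommutators S m, ∃ n, 0 < n ∧ t ^ n ∈ H := by
      cases m with
      | zero => exact hpow
      | succ k =>
        rintro _ ⟨x, hx, s, hs, rfl⟩
        have hxk := iteratedCommutators_subset_lowerCentralSeries S k hx
        obtain ⟨M, hM, hsM⟩ := hpow s hs
        obtain ⟨N, hN, -, hxN⟩ := exists_pow_mem_of_index_ne_zero hHA x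
        exact ⟨M * N, Nat.mul_pos hM hN, commutatorElement_pow_mem_of_central
          (fun g => hA (commutator_mem_commutator hxk (mem_top g)))
          (sup_le_sup_left hA H hxN) hsM⟩
    have := isMulCommutative_closure fun x hx y _ =>
      (mem_center_iff.mp (hA (iteratedCommutators_subset_lowerCentralSeries S m hx)) y).symm
    have hrel := relIndex_closure_ne_zero_of_isMulCommutative
      (iteratedCommutators_finite hS m) hpowA
    rw [hgenA, ← relIndex_sup_left_of_le_normalizer
      (hA.trans (center_le_normalizer (H : Set G)))] at hrel
    rw [← relIndex_mul_index (le_sup_left : H ≤ H ⊔ A)]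
    exact mul_ne_zero hrel hHA

theorem relIndex_closure_ne_zero_of_isNilpotent (hS : S.Finite)
    [Group.IsNilpotent (closure S)] (hpow : ∀ s ∈ S, ∃ n, 0 < n ∧ s ^ n ∈ H) :
    H.relIndex (closure S) ≠ 0 := by
  obtain ⟨m, hm⟩ := Subgroup.nilpotent_iff_lowerCentralSeries.mp ‹Group.IsNilpotent (closure S)›
  exact index_ne_zero_of_lowerCentralSeries_eq_bot (hS.preimage Subtype.val_injective.injOn)
    closure_closure_coe_preimage hm (forall_exists_pow_mem_subgroupOf hpow)

end

namespace Subgroup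

variable {G : Type*} [Group G] {H K : Subgroup G}

theorem le_radical (H : Subgroup G) : H ≤ H.radical :=
  le_sInf fun _ hL => hL.1

theorem mem_radical_of_pow_mem {x : G} {m : ℕ} (hm : 0 < m) (hx : x ^ m ∈ H.radical) :
    x ∈ H.radical := by
  rw [radical, mem_sInf] at hx ⊢
  exact fun L hL => hL.2 x m hm (hx L hL)

theorem radical_mono (h : H ≤ K) : H.radical ≤ K.radical :=
  sInf_le_sInf fun _ hL => ⟨h.trans hL.1, hL.2⟩

theorem radical_eq_of_le_of_le_radical (hHK : H ≤ K) (hK : K ≤ H.radical) :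
    H.radical = K.radical :=
  (radical_mono hHK).antisymm (sInf_le ⟨hK, fun _ _ hm hx => mem_radical_of_pow_mem hm hx⟩)

end Subgroup

theorem finite_relindex_and_radical_eq_general {G : Type*} [Group G]
    [Group.IsNilpotent G]
    (H K : Subgroup G) (hHK : H ≤ K) (S : Finset G)
    (hgen : Subgroup.closure (S : Set G) = K)
    (hpow : ∀ x ∈ S, ∃ m : ℕ, 0 < m ∧ x ^ m ∈ H) :
    H.relIndex K ≠ 0 ∧ H.radical = K.radical := by
  subst hgen
  refine ⟨relIndex_closure_ne_zero_of_isNilpotent S.finite_toSet hpow,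
    radical_eq_of_le_of_le_radical hHK ((closure_le _).mpr fun s hs => ?_)⟩
  obtain ⟨n, hn, hsn⟩ := hpow s hs
  exact mem_radical_of_pow_mem hn (le_radical H hsn)

theorem finite_relindex_and_radical_eq {G : Type*} [Group G]
    [Group.FG G] [Group.IsNilpotent G]
    (H K : Subgroup G) (hHK : H ≤ K) (S : Finset G)
    (hgen : Subgroup.closure (S : Set G) = K)
    (hpow : ∀ x ∈ S, ∃ m : ℕ, 0 < m ∧ x ^ m ∈ H) :
    H.relIndex K ≠ 0 ∧ H.radical = K.radical :=
  finite_relindex_and_radical_eq_general H K hHK S hgen hpow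
end
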